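/- Let a : ℕ → ℕ be an injective computable function whose range A is not computable. Then the real number s = Σ_{m=0}^∞ 2^{-a(m)} is not a computable real number. -/

import Mathlib

/-!
If `q` computes `s = ∑ 2 ^ (-a m)`, then `q (n + 2) / 2 ^ (n + 2)` pins `s` down to within
`2 ^ (-(n + 2))`. Enumerate partial sums of `s` until one exceeds the lower end of that interval:
the remaining tail is then below `2 ^ (-(n + 1)) < 2 ^ (-n)`, so if `n = a m` the index `m` has
already been seen. This decides membership in the range of `a`.
-/

/-- A real number is computable if it can be approximated to precision `2^{-k}`
by a computable sequence of dyadic rationals. -/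
def IsComputableReal (x : ℝ) : Prop :=
  ∃ q : ℕ → ℤ, Computable q ∧ ∀ k : ℕ, |x - (q k : ℝ) / 2 ^ k| < (2 : ℝ) ^ (-(k : ℤ))

open Finset

theorem Primrec.nat_pow : Primrec₂ ((· ^ ·) : ℕ → ℕ → ℕ) :=
  Primrec₂.unpaired'.mp Nat.Primrec.pow

theorem Primrec.int_toNat : Primrec Int.toNat := by
  -- `encode` sends `Int.ofNat m` to `2 * m` and `Int.negSucc m` to `2 * m + 1`.
  refine (Primrec.ite (Primrec.eq.comp (Primrec.nat_mod.comp .encode (.const 2)) (.const 0))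
    (Primrec.nat_div.comp .encode (.const 2)) (.const 0)).of_eq fun z => ?_
  rcases z with m | m
  · change (if 2 * m % 2 = 0 then 2 * m / 2 else 0) = m
    simp
  · change (if (2 * m + 1) % 2 = 0 then (2 * m + 1) / 2 else 0) = 0
    simp [Nat.add_mod]

theorem lt_of_tsum_sub_sum_range_lt {f : ℕ → ℝ} (hf : Summable f) (hf0 : ∀ i, 0 ≤ f i)
    {N m : ℕ} (h : ∑' i, f i - ∑ i ∈ range N, f i < f m) : m < N := by
  by_contra! hNm
  have hm : m ∉ range N := by simpa using hNm
  have := hf.sum_le_tsum (insert m (range N)) (fun i _ => hf0 i)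
  rw [sum_insert hm] at this
  linarith

/-- When `z ≤ 0` both sides hold, so truncating with `Int.toNat` loses nothing. -/
theorem toNat_mul_two_pow_lt_iff (z : ℤ) (k u v : ℕ) :
    z.toNat * 2 ^ v < 2 ^ k * u + 2 ^ v ↔ ((z : ℝ) - 1) / 2 ^ k < u / 2 ^ v := by
  rw [div_lt_div_iff₀ (by positivity) (by positivity)]
  rcases le_or_gt z 0 with hz | hz
  · have hz' : (z : ℝ) - 1 < 0 := by linarith [show (z : ℝ) ≤ 0 by exact_mod_cast hz]
    rw [Int.toNat_of_nonpos hz, zero_mul]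
    exact iff_of_true (by positivity)
      ((mul_neg_of_neg_of_pos hz' (by positivity)).trans_le (by positivity))
  · have hcast : ((z.toNat : ℕ) : ℝ) = z := by exact_mod_cast Int.toNat_of_nonneg hz.le
    rw [← hcast, ← Nat.cast_lt (α := ℝ)]
    push_cast
    constructor <;> intro h <;> linarith

/-- A pair `(u, v)` stands for the dyadic rational `u / 2 ^ v`. -/
def dyadicPartialSum (a : ℕ → ℕ) : ℕ → ℕ × ℕ :=
  Nat.rec (0, 0) fun N p => (p.1 * 2 ^ a N + 2 ^ p.2, p.2 + a N)

theorem dyadicPartialSum_succ (a : ℕ → ℕ) (N : ℕ) :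
    dyadicPartialSum a (N + 1) =
      ((dyadicPartialSum a N).1 * 2 ^ a N + 2 ^ (dyadicPartialSum a N).2,
        (dyadicPartialSum a N).2 + a N) :=
  rfl

theorem dyadicPartialSum_div (a : ℕ → ℕ) (N : ℕ) :
    ((dyadicPartialSum a N).1 : ℝ) / 2 ^ (dyadicPartialSum a N).2 =
      ∑ m ∈ range N, (2 : ℝ) ^ (-(a m : ℤ)) := by
  induction N with
  | zero => simp [dyadicPartialSum]
  | succ N ih =>
    rw [dyadicPartialSum_succ, sum_range_succ, ← ih]
    push_cast
    rw [zpow_neg, zpow_natCast, pow_add]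
    field_simp

theorem computable_dyadicPartialSum {a : ℕ → ℕ} (ha : Computable a) :
    Computable (dyadicPartialSum a) := by
  have hstep : Primrec fun x : (ℕ × ℕ) × ℕ => (x.1.1 * 2 ^ x.2 + 2 ^ x.1.2, x.1.2 + x.2) :=
    .pair
      (Primrec.nat_add.comp
        (Primrec.nat_mul.comp (Primrec.fst.comp .fst) (Primrec.nat_pow.comp (.const 2) .snd))
        (Primrec.nat_pow.comp (.const 2) (Primrec.snd.comp .fst)))
      (Primrec.nat_add.comp (Primrec.snd.comp .fst) .snd)
  exact Computable.nat_rec .id (.const (0, 0))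
    (hstep.to_comp.comp
      (.pair (Computable.snd.comp .snd) (ha.comp (Computable.fst.comp .snd)))).to₂

section RangeSearch

variable {a : ℕ → ℕ} {q : ℕ → ℤ}

/-- Search for a preimage of `n` under `a` that gives up at `m` once the `m`-th partial sum
exceeds `(q (n + 2) - 1) / 2 ^ (n + 2)`; no later index can then map to `n`. -/
def RangeSearch (a : ℕ → ℕ) (q : ℕ → ℤ) (n m : ℕ) : Prop :=
  a m = n ∨ (q (n + 2)).toNat * 2 ^ (dyadicPartialSum a m).2 <
    2 ^ (n + 2) * (dyadicPartialSum a m).1 + 2 ^ (dyadicPartialSum a m).2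

instance (a : ℕ → ℕ) (q : ℕ → ℤ) : DecidableRel (RangeSearch a q) :=
  fun _ _ => inferInstanceAs (Decidable (_ ∨ _))

theorem rangeSearch_iff {n m : ℕ} :
    RangeSearch a q n m ↔
      a m = n ∨
        ((q (n + 2) : ℝ) - 1) / 2 ^ (n + 2) < ∑ i ∈ range m, (2 : ℝ) ^ (-(a i : ℤ)) := by
  rw [RangeSearch, toNat_mul_two_pow_lt_iff, dyadicPartialSum_div]

theorem computablePred_rangeSearch (ha : Computable a) (hq : Computable q) :
    ComputablePred fun p : ℕ × ℕ => RangeSearch a q p.1 p.2 := by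
  have hD : Computable fun p : ℕ × ℕ => dyadicPartialSum a p.2 :=
    (computable_dyadicPartialSum ha).comp .snd
  have hk : Computable fun p : ℕ × ℕ => p.1 + 2 := Primrec.nat_add.to_comp.comp .fst (.const 2)
  have hpow : Computable fun p : ℕ × ℕ => 2 ^ (dyadicPartialSum a p.2).2 :=
    Primrec.nat_pow.to_comp.comp (Computable.const 2) (Computable.snd.comp hD)
  have hlhs : Computable fun p : ℕ × ℕ =>
      (q (p.1 + 2)).toNat * 2 ^ (dyadicPartialSum a p.2).2 :=
    Primrec.nat_mul.to_comp.comp (Primrec.int_toNat.to_comp.comp (hq.comp hk)) hpow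
  have hrhs : Computable fun p : ℕ × ℕ =>
      2 ^ (p.1 + 2) * (dyadicPartialSum a p.2).1 + 2 ^ (dyadicPartialSum a p.2).2 :=
    Primrec.nat_add.to_comp.comp (Primrec.nat_mul.to_comp.comp
      (Primrec.nat_pow.to_comp.comp (.const 2) hk) (Computable.fst.comp hD)) hpow
  exact Computable.computablePred ((Primrec.or.to_comp.comp
    (Primrec.eq.decide.to_comp.comp (ha.comp .snd) .fst)
    (Primrec.nat_lt.decide.to_comp.comp hlhs hrhs)).of_eq fun _ => (Bool.decide_or _ _).symm)

end RangeSearch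

section SpeckerSum

variable {a : ℕ → ℕ} {q : ℕ → ℤ}

theorem summable_two_zpow_neg_comp (ha : Function.Injective a) :
    Summable fun m => (2 : ℝ) ^ (-(a m : ℤ)) := by
  have h : Summable fun k : ℕ => (2 : ℝ) ^ (-(k : ℤ)) :=
    summable_geometric_two.congr fun k => by simp [zpow_neg]
  exact h.comp_injective ha

theorem exists_rangeSearch (ha : Function.Injective a)
    (hq : ∀ k : ℕ,
      |∑' m, (2 : ℝ) ^ (-(a m : ℤ)) - (q k : ℝ) / 2 ^ k| < (2 : ℝ) ^ (-(k : ℤ)))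
    (n : ℕ) : ∃ m, RangeSearch a q n m := by
  have hlow : ((q (n + 2) : ℝ) - 1) / 2 ^ (n + 2) < ∑' m, (2 : ℝ) ^ (-(a m : ℤ)) := by
    have happrox := (abs_lt.1 (hq (n + 2))).1
    rw [zpow_neg, zpow_natCast] at happrox
    rw [sub_div, one_div]
    linarith
  obtain ⟨m, hm⟩ := ((summable_two_zpow_neg_comp ha).hasSum.tendsto_sum_nat.eventually
    (eventually_gt_nhds hlow)).exists
  exact ⟨m, rangeSearch_iff.2 (Or.inr hm)⟩

theorem le_of_rangeSearch (ha : Function.Injective a)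
    (hq : ∀ k : ℕ,
      |∑' m, (2 : ℝ) ^ (-(a m : ℤ)) - (q k : ℝ) / 2 ^ k| < (2 : ℝ) ^ (-(k : ℤ)))
    {n m N : ℕ} (hN : RangeSearch a q n N) (hm : a m = n) : m ≤ N := by
  rcases rangeSearch_iff.1 hN with hN | hN
  · exact (ha (hm.trans hN.symm)).le
  refine (lt_of_tsum_sub_sum_range_lt (summable_two_zpow_neg_comp ha) (fun _ => by positivity)
    ?_).le
  -- The tail is below `2 * 2 ^ (-(n + 2))`, less than the term `2 ^ (-n)`.
  have happrox := (abs_lt.1 (hq (n + 2))).2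
  rw [hm]
  simp only [zpow_neg, zpow_natCast, pow_add] at happrox hN ⊢
  have h2n : (0 : ℝ) < 2 ^ n := by positivity
  field_simp at happrox hN ⊢
  linarith

theorem mem_range_iff_find (ha : Function.Injective a)
    (hq : ∀ k : ℕ,
      |∑' m, (2 : ℝ) ^ (-(a m : ℤ)) - (q k : ℝ) / 2 ^ k| < (2 : ℝ) ^ (-(k : ℤ)))
    (hex : ∀ n, ∃ m, RangeSearch a q n m) (n : ℕ) :
    n ∈ Set.range a ↔ a (Nat.find (hex n)) = n := by
  refine ⟨?_, fun h => ⟨_, h⟩⟩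
  rintro ⟨m, rfl⟩
  rcases (le_of_rangeSearch ha hq (Nat.find_spec (hex (a m))) rfl).lt_or_eq with hlt | heq
  · exact absurd (Or.inl rfl) (Nat.find_min _ hlt)
  · rw [← heq]

end SpeckerSum

theorem stmt_8 (a : ℕ → ℕ) (ha : Function.Injective a) (hcomp : Computable a)
    (hA : ¬ ComputablePred (fun n => n ∈ Set.range a)) :
    ¬ IsComputableReal (∑' m, (2 : ℝ) ^ (-(a m : ℤ))) := by
  rintro ⟨q, hq, happrox⟩
  have hex := exists_rangeSearch ha happrox
  have hfind : Computable fun n => Nat.find (hex n) :=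
    Computable.find (computablePred_rangeSearch hcomp hq) hex
  exact hA <| (Computable.computablePred (p := fun n => a (Nat.find (hex n)) = n)
    (Primrec.eq.decide.to_comp.comp (hcomp.comp hfind) .id)).of_eq
    fun n => (mem_range_iff_find ha happrox hex n).symm
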